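/- For every ρ̄ of the form ρ̄ = μ̄(f₁,f₂) with f₁, f₂ nonnegative, neither almost-everywhere zero, and ν₁₂(1+|v|²)f₁, ν₂₁(1+|v|²)f₂ integrable, the mixture dual function λ ↦ z̄(λ; ρ̄) attains its infimum over Λ̄ = { λ = (λ₀¹,λ₀²,λ₁,λ₂) ∈ ℝ⁶ : λ₂ < 0 } at a unique point λ* ∈ Λ̄. -/

import Mathlib

/-!
`z̄(·; ρ̄)` is strictly convex on `Λ̄`: it is `exp` integrated against a positive weight and
composed with `λ ↦ λ·a(v)`, and two distinct parameters give exponents that differ off a quadric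
in `v`, which is Lebesgue-null. Being convex on an open set, it is continuous there.

Its sublevel sets are compact. They are closed: along a sequence approaching `λ₂ = 0`, Fatou's
lemma would make `ν₁₂ exp(λ¹·a¹)` integrable at the limit, contradicting Assumption 3.1. They are
bounded: an unbounded closed convex set contains a ray `λ₀ + t u` with `u ≠ 0`, and boundedness of
`z̄` along it forces `uᵏ·aᵏ ≤ 0` a.e. for both species and `u·ρ̄ ≥ 0`. Since
`u·ρ̄ = ∫ ν₁₂ (u¹·a¹) f₁ + ∫ ν₂₁ (u²·a²) f₂ ≤ 0`, both integrands vanish a.e., and as `fₖ` is not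
a.e. zero while `uᵏ·aᵏ ≠ 0` a.e. unless `uᵏ = 0`, we get `u = 0`.

A continuous function attains its minimum on a nonempty compact sublevel set, and strict convexity
makes the minimiser unique.
-/

open MeasureTheory Real Filter
open scoped Topology

noncomputable section

abbrev V3 : Type := Fin 3 → ℝ

def dot3 (a b : V3) : ℝ := ∑ i, a i * b i

def nsq (v : V3) : ℝ := ∑ i, (v i) ^ 2

abbrev L5 : Type := ℝ × V3 × ℝ

def dot5 (a b : L5) : ℝ := a.1 * b.1 + dot3 a.2.1 b.2.1 + a.2.2 * b.2.2

def aVec (m : ℝ) (v : V3) : L5 := (m, m • v, m * nsq v)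

def expA (m : ℝ) (l : L5) (v : V3) : ℝ := Real.exp (dot5 l (aVec m v))

def momVec (m : ℝ) (ν g : V3 → ℝ) : L5 :=
  (∫ v, ν v * (m * g v), fun i => ∫ v, ν v * (m * v i) * g v,
    ∫ v, ν v * (m * nsq v) * g v)

def zdual (m : ℝ) (ν : V3 → ℝ) (l ρ : L5) : ℝ :=
  (∫ v, ν v * expA m l v) - dot5 l ρ

def entH (z : ℝ) : ℝ := z * Real.log z - z

def dualCLM (ρ : L5) : L5 →L[ℝ] ℝ :=
  LinearMap.toContinuousLinearMap
    { toFun := fun δ => dot5 δ ρ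
      map_add' := by
        intro a b
        simp [dot5, dot3, Prod.fst_add, Prod.snd_add, Pi.add_apply, add_mul,
          Finset.sum_add_distrib]
        ring
      map_smul' := by
        intro c a
        simp only [dot5, dot3, Prod.smul_fst, Prod.smul_snd, Pi.smul_apply,
          smul_eq_mul, Finset.mul_sum, RingHom.id_apply]
        ring_nf
        rw [Finset.mul_sum]
        ring_nf }


abbrev L6 : Type := ℝ × ℝ × V3 × ℝ

/-- First-species component `λ¹ = (λ₀¹, λ₁, λ₂)` of `λ = (λ₀¹, λ₀², λ₁, λ₂)`. -/
def comp1 (l : L6) : L5 := (l.1, l.2.2.1, l.2.2.2)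

/-- Second-species component `λ² = (λ₀², λ₁, λ₂)`. -/
def comp2 (l : L6) : L5 := (l.2.1, l.2.2.1, l.2.2.2)

def dot6 (a b : L6) : ℝ :=
  a.1 * b.1 + a.2.1 * b.2.1 + dot3 a.2.2.1 b.2.2.1 + a.2.2.2 * b.2.2.2

/-- The mixture functional `Φ(λ) = ∫ ν₁₂ exp(λ¹·a¹) + ∫ ν₂₁ exp(λ²·a²)`. -/
def PhiMix (m₁ m₂ : ℝ) (ν₁₂ ν₂₁ : V3 → ℝ) (l : L6) : ℝ :=
  (∫ v, ν₁₂ v * expA m₁ (comp1 l) v) + (∫ v, ν₂₁ v * expA m₂ (comp2 l) v)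

/-- The mixture moment map `μ̄(g₁,g₂) ∈ ℝ⁶`. -/
def muBar (m₁ m₂ : ℝ) (ν₁₂ ν₂₁ g₁ g₂ : V3 → ℝ) : L6 :=
  (∫ v, m₁ * ν₁₂ v * g₁ v,
   ∫ v, m₂ * ν₂₁ v * g₂ v,
   fun i => (∫ v, m₁ * ν₁₂ v * v i * g₁ v) + ∫ v, m₂ * ν₂₁ v * v i * g₂ v,
   (∫ v, m₁ * ν₁₂ v * nsq v * g₁ v) + ∫ v, m₂ * ν₂₁ v * nsq v * g₂ v)

/-- The mixture dual function `z̄(λ;ρ̄) = Φ(λ) − λ·ρ̄`. -/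
def zbar (m₁ m₂ : ℝ) (ν₁₂ ν₂₁ : V3 → ℝ) (l ρ : L6) : ℝ :=
  PhiMix m₁ m₂ ν₁₂ ν₂₁ l - dot6 l ρ

open scoped InnerProductSpace

theorem Real.exists_linear_lt_mul_exp {c ε : ℝ} (hc : 0 < c) (hε : 0 < ε) (B₀ B₁ : ℝ) :
    ∃ t, 0 ≤ t ∧ B₀ + t * B₁ < c * exp (t * ε) := by
  have hlin : (fun t : ℝ => B₀ + t * B₁) =o[atTop] fun t => exp (ε * t) := by
    have h0 := isLittleO_pow_exp_pos_mul_atTop 0 hε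
    have h1 := isLittleO_pow_exp_pos_mul_atTop 1 hε
    simp only [pow_zero, pow_one] at h0 h1
    exact (h0.const_mul_left B₀).add (h1.const_mul_left B₁) |>.congr_left fun t => by ring
  obtain ⟨t, ht, ht0⟩ := ((hlin.def (half_pos hc)).and (eventually_ge_atTop 0)).exists
  refine ⟨t, ht0, ?_⟩
  rw [Real.norm_of_nonneg (exp_pos _).le, mul_comm ε] at ht
  have := mul_pos hc (exp_pos (t * ε))
  linarith [le_abs_self (B₀ + t * B₁), Real.norm_eq_abs (B₀ + t * B₁)]

namespace MeasureTheory

variable {α : Type*} [MeasurableSpace α] {μ : Measure α}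

theorem integrable_of_tendsto_of_integral_le {g : ℕ → α → ℝ} {G : α → ℝ} {C : ℝ}
    (hg0 : ∀ n x, 0 ≤ g n x) (hg : ∀ n, Integrable (g n) μ) (hG : AEStronglyMeasurable G μ)
    (hlim : ∀ᵐ x ∂μ, Tendsto (fun n => g n x) atTop (𝓝 (G x)))
    (hC : ∀ᶠ n in atTop, ∫ x, g n x ∂μ ≤ C) : Integrable G μ := by
  refine ⟨hG, ?_⟩
  have hlint : ∀ n, ∫⁻ x, ‖g n x‖ₑ ∂μ = ENNReal.ofReal (∫ x, g n x ∂μ) := fun n => by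
    rw [ofReal_integral_eq_lintegral_ofReal (hg n) (.of_forall (hg0 n))]
    exact lintegral_congr fun x => Real.enorm_of_nonneg (hg0 n x)
  calc ∫⁻ x, ‖G x‖ₑ ∂μ = ∫⁻ x, liminf (fun n => ‖g n x‖ₑ) atTop ∂μ :=
        lintegral_congr_ae (hlim.mono fun x hx => hx.enorm.liminf_eq.symm)
    _ ≤ liminf (fun n => ∫⁻ x, ‖g n x‖ₑ ∂μ) atTop :=
        lintegral_liminf_le' fun n => (hg n).1.enorm
    _ ≤ ENNReal.ofReal C :=
        liminf_le_of_frequently_le' (hC.mono fun n hn => by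
          rw [hlint]; exact ENNReal.ofReal_le_ofReal hn).frequently
    _ < ⊤ := ENNReal.ofReal_lt_top

theorem integral_mul_exp_convex_combo_lt {w f g : α → ℝ} {a b : ℝ} (hw : ∀ x, 0 < w x)
    (hf : Integrable (fun x => w x * exp (f x)) μ) (hg : Integrable (fun x => w x * exp (g x)) μ)
    (hfg : Integrable (fun x => w x * exp (a * f x + b * g x)) μ) (hne : ¬ f =ᵐ[μ] g)
    (ha : 0 < a) (hb : 0 < b) (hab : a + b = 1) :
    ∫ x, w x * exp (a * f x + b * g x) ∂μ
      < a * ∫ x, w x * exp (f x) ∂μ + b * ∫ x, w x * exp (g x) ∂μ := by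
  have hpt : ∀ x, f x ≠ g x →
      w x * exp (a * f x + b * g x) < a * (w x * exp (f x)) + b * (w x * exp (g x)) := by
    intro x hx
    have := strictConvexOn_exp.2 (Set.mem_univ (f x)) (Set.mem_univ (g x)) hx ha hb hab
    simp only [smul_eq_mul] at this
    nlinarith [hw x]
  have hle : ∀ x,
      w x * exp (a * f x + b * g x) ≤ a * (w x * exp (f x)) + b * (w x * exp (g x)) := by
    intro x
    have := convexOn_exp.2 (Set.mem_univ (f x)) (Set.mem_univ (g x)) ha.le hb.le hab
    simp only [smul_eq_mul] at this
    nlinarith [hw x]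
  have hsum : Integrable (fun x => a * (w x * exp (f x)) + b * (w x * exp (g x))) μ :=
    (hf.const_mul a).add (hg.const_mul b)
  rw [← integral_const_mul, ← integral_const_mul, ← integral_add (hf.const_mul a) (hg.const_mul b),
    ← sub_pos, ← integral_sub hsum hfg, integral_pos_iff_support_of_nonneg_ae
      (.of_forall fun x => sub_nonneg.2 (hle x)) (hsum.sub hfg)]
  refine pos_iff_ne_zero.2 fun h0 => hne (measure_mono_null (fun x hx => ?_) h0)
  exact (sub_pos.2 (hpt x hx)).ne'

theorem ae_nonpos_of_integral_mul_exp_le {w p : α → ℝ} {B₀ B₁ : ℝ} (hw : ∀ x, 0 < w x)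
    (hp : Measurable p) (hint : ∀ t, 0 ≤ t → Integrable (fun x => w x * exp (t * p x)) μ)
    (hle : ∀ t, 0 ≤ t → ∫ x, w x * exp (t * p x) ∂μ ≤ B₀ + t * B₁) :
    ∀ᵐ x ∂μ, p x ≤ 0 := by
  have hw_int : Integrable w μ := by simpa using hint 0 le_rfl
  have hsmall : ∀ ε, 0 < ε → μ {x | ε ≤ p x} = 0 := by
    intro ε hε
    by_contra hpos
    set S := {x | ε ≤ p x}
    have hc : 0 < ∫ x in S, w x ∂μ := by
      rw [setIntegral_pos_iff_support_of_nonneg_ae (.of_forall fun x => (hw x).le)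
        hw_int.integrableOn, Function.support_eq_univ fun x => (hw x).ne', Set.univ_inter]
      exact pos_iff_ne_zero.2 hpos
    obtain ⟨t, ht, hlt⟩ := Real.exists_linear_lt_mul_exp hc hε B₀ B₁
    have hS : MeasurableSet S := measurableSet_le measurable_const hp
    refine hlt.not_ge ?_
    calc (∫ x in S, w x ∂μ) * exp (t * ε) = ∫ x in S, w x * exp (t * ε) ∂μ :=
          (integral_mul_const _ _).symm
      _ ≤ ∫ x in S, w x * exp (t * p x) ∂μ :=
          setIntegral_mono_on (hw_int.mul_const _).integrableOn (hint t ht).integrableOn hS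
            fun x hx => mul_le_mul_of_nonneg_left
              (exp_le_exp.2 (mul_le_mul_of_nonneg_left hx ht)) (hw x).le
      _ ≤ ∫ x, w x * exp (t * p x) ∂μ :=
          setIntegral_le_integral (hint t ht) (.of_forall fun x => by positivity [hw x])
      _ ≤ B₀ + t * B₁ := hle t ht
  have hae : ∀ᵐ x ∂μ, ∀ n : ℕ, p x < 1 / ((n : ℝ) + 1) := by
    refine ae_all_iff.2 fun n => ?_
    simpa [ae_iff] using hsmall _ (Nat.one_div_pos_of_nat (α := ℝ))
  filter_upwards [hae] with x hx
  exact ge_of_tendsto' tendsto_one_div_add_atTop_nhds_zero_nat fun n => (hx n).le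

end MeasureTheory

theorem Convex.exists_ray_subset_of_not_isBounded {E : Type*} [NormedAddCommGroup E]
    [NormedSpace ℝ E] [FiniteDimensional ℝ E] {S : Set E} (hS : Convex ℝ S) (hSc : IsClosed S)
    {x₀ : E} (hx₀ : x₀ ∈ S) (hunb : ¬ Bornology.IsBounded S) :
    ∃ u : E, u ≠ 0 ∧ ∀ t : ℝ, 0 ≤ t → x₀ + t • u ∈ S := by
  have hfar : ∀ n : ℕ, ∃ x ∈ S, (n : ℝ) < ‖x - x₀‖ := by
    intro n
    by_contra! h
    exact hunb ((Metric.isBounded_closedBall (x := x₀) (r := n)).subset fun x hx => by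
      simpa [dist_eq_norm] using h x hx)
  choose x hxS hxfar using hfar
  have hpos : ∀ n, 0 < ‖x n - x₀‖ := fun n => (Nat.cast_nonneg n).trans_lt (hxfar n)
  set u : ℕ → E := fun n => ‖x n - x₀‖⁻¹ • (x n - x₀)
  have hu : ∀ n, u n ∈ Metric.sphere (0 : E) 1 := fun n => by
    simp [u, norm_smul, (hpos n).ne']
  obtain ⟨u₀, hu₀, φ, hφ, hlim⟩ := (isCompact_sphere (0 : E) 1).tendsto_subseq hu
  refine ⟨u₀, ne_zero_of_mem_unit_sphere ⟨u₀, hu₀⟩, fun t ht => ?_⟩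
  refine hSc.mem_of_tendsto (tendsto_const_nhds.add (hlim.const_smul t)) ?_
  filter_upwards [eventually_ge_atTop ⌈t⌉₊] with n hn
  have htn : t ≤ ‖x (φ n) - x₀‖ := by
    have := (Nat.le_ceil t).trans (Nat.cast_le.2 (hn.trans hφ.le_apply))
    linarith [hxfar (φ n)]
  have hseg := hS.add_smul_sub_mem hx₀ (hxS (φ n))
    ⟨div_nonneg ht (hpos _).le, (div_le_one (hpos _)).2 htn⟩
  simpa [u, smul_smul, div_eq_mul_inv] using hseg

theorem StrictConvexOn.existsUnique_isMinOn {E : Type*} [AddCommGroup E] [Module ℝ E]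
    [TopologicalSpace E] {U : Set E} {F : E → ℝ} (hF : StrictConvexOn ℝ U F)
    (hcont : ContinuousOn F U) (hcpt : ∀ M, IsCompact {x ∈ U | F x ≤ M}) (hU : U.Nonempty) :
    ∃! x, x ∈ U ∧ IsMinOn F U x := by
  obtain ⟨x₀, hx₀⟩ := hU
  obtain ⟨x, ⟨hx, -⟩, hmin⟩ :=
    (hcpt (F x₀)).exists_isMinOn ⟨x₀, hx₀, le_rfl⟩ (hcont.mono fun _ hy => hy.1)
  have hglobal : IsMinOn F U x := fun y hy =>
    (le_total (F y) (F x₀)).elim (fun h => hmin ⟨hy, h⟩) (hmin ⟨hx₀, le_rfl⟩).trans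
  exact ⟨x, ⟨hx, hglobal⟩, fun y ⟨hy, hymin⟩ => hF.eq_of_isMinOn hymin hglobal hy hx⟩

namespace MeasureTheory.Measure

variable {E : Type*} [NormedAddCommGroup E] [InnerProductSpace ℝ E] [FiniteDimensional ℝ E]
  [MeasurableSpace E] [BorelSpace E] (μ : Measure E) [μ.IsAddHaarMeasure]

theorem addHaar_setOf_inner_eq {a : E} (ha : a ≠ 0) (c : ℝ) : μ {x | ⟪a, x⟫_ℝ = c} = 0 := by
  rcases Set.eq_empty_or_nonempty {x | ⟪a, x⟫_ℝ = c} with h | ⟨x₀, hx₀⟩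
  · rw [h, measure_empty]
  have hset : {x | ⟪a, x⟫_ℝ = c} = (· + -x₀) ⁻¹' (LinearMap.ker (innerₛₗ ℝ a) : Set E) := by
    ext x
    change ⟪a, x⟫_ℝ = c ↔ ⟪a, x + -x₀⟫_ℝ = 0
    rw [inner_add_right, inner_neg_right, hx₀.out, add_neg_eq_zero]
  rw [hset, measure_preimage_add_right]
  refine addHaar_submodule μ _ fun htop => ?_
  have : a ∈ LinearMap.ker (innerₛₗ ℝ a) := htop ▸ Submodule.mem_top
  exact ha (inner_self_eq_zero.1 this)

theorem addHaar_setOf_quadric_eq_zero [Nontrivial E] {c₀ c₂ : ℝ} {a : E}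
    (h : c₀ ≠ 0 ∨ a ≠ 0 ∨ c₂ ≠ 0) : μ {x | c₀ + ⟪a, x⟫_ℝ + c₂ * ‖x‖ ^ 2 = 0} = 0 := by
  by_cases hc₂ : c₂ = 0
  · by_cases ha : a = 0
    · have hc₀ : c₀ ≠ 0 := by tauto
      simp [ha, hc₂, hc₀]
    · convert addHaar_setOf_inner_eq μ ha (-c₀) using 2
      ext x
      change c₀ + ⟪a, x⟫_ℝ + c₂ * ‖x‖ ^ 2 = 0 ↔ ⟪a, x⟫_ℝ = -c₀
      rw [hc₂]
      constructor <;> intro hx <;> linarith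
  -- completing the square puts the quadric on a sphere
  set b : E := (2 * c₂)⁻¹ • a
  refine measure_mono_null (fun x hx => ?_) (addHaar_sphere μ (-b) √(‖b‖ ^ 2 - c₀ / c₂))
  have hsq : ‖x - -b‖ ^ 2 = ‖b‖ ^ 2 - c₀ / c₂ := by
    rw [sub_neg_eq_add, norm_add_sq_real, inner_smul_right, real_inner_comm]
    field_simp
    linear_combination hx.out
  rw [Metric.mem_sphere, dist_eq_norm, ← hsq, Real.sqrt_sq (norm_nonneg _)]

end MeasureTheory.Measure

lemma nsq_nonneg (v : V3) : 0 ≤ nsq v :=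
  Finset.sum_nonneg fun i _ => sq_nonneg (v i)

lemma nsq_toLp (v : V3) : nsq v = ‖WithLp.toLp 2 v‖ ^ 2 := by
  simp [nsq, EuclideanSpace.real_norm_sq_eq]

lemma dot3_toLp (a v : V3) : dot3 a v = ⟪WithLp.toLp 2 a, WithLp.toLp 2 v⟫_ℝ := by
  simp [dot3, EuclideanSpace.inner_toLp_toLp, dotProduct, mul_comm]

lemma dot5_aVec (c : L5) (m : ℝ) (v : V3) :
    dot5 c (aVec m v) = m * (c.1 + dot3 c.2.1 v + c.2.2 * nsq v) := by
  simp only [dot5, aVec, dot3, Pi.smul_apply, smul_eq_mul, Fin.sum_univ_three]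
  ring

theorem volume_setOf_dot5_aVec_eq_zero {m : ℝ} (hm : m ≠ 0) {c : L5} (hc : c ≠ 0) :
    volume {v : V3 | dot5 c (aVec m v) = 0} = 0 := by
  rw [← (EuclideanSpace.volume_preserving_symm_measurableEquiv_toLp (Fin 3)).measure_preimage_equiv]
  have hc' : c.1 ≠ 0 ∨ WithLp.toLp 2 c.2.1 ≠ 0 ∨ c.2.2 ≠ 0 := by
    by_contra! h
    exact hc (Prod.ext h.1 (Prod.ext (by simpa using h.2.1) h.2.2))
  convert Measure.addHaar_setOf_quadric_eq_zero volume hc' using 2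
  ext x
  simp [dot5_aVec, hm, dot3_toLp, nsq_toLp]

lemma dot5_add (x y w : L5) : dot5 (x + y) w = dot5 x w + dot5 y w := (dualCLM w).map_add x y

lemma dot5_smul (t : ℝ) (x w : L5) : dot5 (t • x) w = t * dot5 x w := (dualCLM w).map_smul t x

lemma dot5_sub (x y w : L5) : dot5 (x - y) w = dot5 x w - dot5 y w := (dualCLM w).map_sub x y

lemma dot6_add (x y w : L6) : dot6 (x + y) w = dot6 x w + dot6 y w := by
  simp only [dot6, dot3, Prod.fst_add, Prod.snd_add, Pi.add_apply, Fin.sum_univ_three]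
  ring

lemma dot6_smul (t : ℝ) (x w : L6) : dot6 (t • x) w = t * dot6 x w := by
  simp only [dot6, dot3, Prod.smul_fst, Prod.smul_snd, Pi.smul_apply, smul_eq_mul,
    Fin.sum_univ_three]
  ring

lemma eq_of_comp1_eq_of_comp2_eq {x y : L6} (h₁ : comp1 x = comp1 y) (h₂ : comp2 x = comp2 y) :
    x = y :=
  Prod.ext (congrArg (·.1) h₁) (Prod.ext (congrArg (·.1) h₂) (congrArg (·.2) h₁))

lemma comp1_add (x y : L6) : comp1 (x + y) = comp1 x + comp1 y := rfl

lemma comp1_smul (t : ℝ) (x : L6) : comp1 (t • x) = t • comp1 x := rfl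

lemma comp2_add (x y : L6) : comp2 (x + y) = comp2 x + comp2 y := rfl

lemma comp2_smul (t : ℝ) (x : L6) : comp2 (t • x) = t • comp2 x := rfl

lemma expA_add_smul (m : ℝ) (c u : L5) (t : ℝ) (v : V3) :
    expA m (c + t • u) v = expA m c v * exp (t * dot5 u (aVec m v)) := by
  rw [expA, expA, dot5_add, dot5_smul, exp_add]

lemma continuous_dot5_aVec (c : L5) (m : ℝ) : Continuous fun v => dot5 c (aVec m v) := by
  simp only [dot5_aVec, dot3, nsq]
  fun_prop

lemma measurable_expA (m : ℝ) (c : L5) : Measurable (expA m c) :=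
  (continuous_exp.comp (continuous_dot5_aVec c m)).measurable

lemma continuous_expA_left (m : ℝ) (v : V3) : Continuous fun c : L5 => expA m c v := by
  simp only [expA, dot5, dot3]
  fun_prop

lemma convex_setOf_snd_snd_neg : Convex ℝ {c : L5 | c.2.2 < 0} :=
  convex_halfSpace_lt ((LinearMap.snd ℝ V3 ℝ).comp (LinearMap.snd ℝ ℝ (V3 × ℝ))).isLinear 0

lemma convex_setOf_snd_snd_snd_neg : Convex ℝ {l : L6 | l.2.2.2 < 0} :=
  convex_halfSpace_lt ((LinearMap.snd ℝ V3 ℝ).comp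
    ((LinearMap.snd ℝ ℝ (V3 × ℝ)).comp (LinearMap.snd ℝ ℝ (ℝ × V3 × ℝ)))).isLinear 0

/-- The integrability half of Assumption 3.1, together with measurability and positivity. -/
structure IsCollisionFrequency (m : ℝ) (ν : V3 → ℝ) : Prop where
  measurable : Measurable ν
  pos : ∀ v, 0 < ν v
  integrable_expA : ∀ c : L5, c.2.2 < 0 → Integrable (fun v => ν v * expA m c v)

def expMoment (m : ℝ) (ν : V3 → ℝ) (c : L5) : ℝ := ∫ v, ν v * expA m c v

lemma expMoment_nonneg {m : ℝ} {ν : V3 → ℝ} (hν : ∀ v, 0 ≤ ν v) (c : L5) :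
    0 ≤ expMoment m ν c :=
  integral_nonneg fun v => mul_nonneg (hν v) (exp_pos _).le

lemma zbar_eq_expMoment (m₁ m₂ : ℝ) (ν₁₂ ν₂₁ : V3 → ℝ) (l ρ : L6) :
    zbar m₁ m₂ ν₁₂ ν₂₁ l ρ = expMoment m₁ ν₁₂ (comp1 l) + expMoment m₂ ν₂₁ (comp2 l) - dot6 l ρ :=
  rfl

theorem strictConvexOn_expMoment {m : ℝ} {ν : V3 → ℝ} (hm : m ≠ 0) (hν : IsCollisionFrequency m ν) :
    StrictConvexOn ℝ {c : L5 | c.2.2 < 0} (expMoment m ν) := by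
  refine ⟨convex_setOf_snd_snd_neg, fun x hx y hy hxy a b ha hb hab => ?_⟩
  have hcomb := convex_setOf_snd_snd_neg hx hy ha.le hb.le hab
  have hne : ¬ (fun v => dot5 x (aVec m v)) =ᵐ[volume] fun v => dot5 y (aVec m v) := by
    intro h
    have hnull := volume_setOf_dot5_aVec_eq_zero hm (sub_ne_zero.2 hxy)
    obtain ⟨v, hv, hv'⟩ := (h.and (measure_eq_zero_iff_ae_notMem.1 hnull)).exists
    exact hv' (show dot5 (x - y) (aVec m v) = 0 by rw [dot5_sub, sub_eq_zero]; exact hv)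
  have key := integral_mul_exp_convex_combo_lt hν.pos (hν.integrable_expA x hx)
    (hν.integrable_expA y hy) ?_ hne ha hb hab
  · simpa only [expMoment, expA, dot5_add, dot5_smul, smul_eq_mul] using key
  · simpa only [expA, dot5_add, dot5_smul] using hν.integrable_expA _ hcomb

theorem strictConvexOn_zbar {m₁ m₂ : ℝ} {ν₁₂ ν₂₁ : V3 → ℝ} (hm₁ : m₁ ≠ 0) (hm₂ : m₂ ≠ 0)
    (hν₁₂ : IsCollisionFrequency m₁ ν₁₂) (hν₂₁ : IsCollisionFrequency m₂ ν₂₁) (ρ : L6) :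
    StrictConvexOn ℝ {l : L6 | l.2.2.2 < 0} fun l => zbar m₁ m₂ ν₁₂ ν₂₁ l ρ := by
  refine ⟨convex_setOf_snd_snd_snd_neg, fun x hx y hy hxy a b ha hb hab => ?_⟩
  have h₁ := strictConvexOn_expMoment hm₁ hν₁₂
  have h₂ := strictConvexOn_expMoment hm₂ hν₂₁
  have hx₁ : comp1 x ∈ {c : L5 | c.2.2 < 0} := hx
  have hy₁ : comp1 y ∈ {c : L5 | c.2.2 < 0} := hy
  have hx₂ : comp2 x ∈ {c : L5 | c.2.2 < 0} := hx
  have hy₂ : comp2 y ∈ {c : L5 | c.2.2 < 0} := hy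
  have hle₁ := h₁.convexOn.2 hx₁ hy₁ ha.le hb.le hab
  have hle₂ := h₂.convexOn.2 hx₂ hy₂ ha.le hb.le hab
  have hlt : comp1 x ≠ comp1 y ∨ comp2 x ≠ comp2 y := by
    by_contra! h
    exact hxy (eq_of_comp1_eq_of_comp2_eq h.1 h.2)
  have hsum : expMoment m₁ ν₁₂ (a • comp1 x + b • comp1 y)
        + expMoment m₂ ν₂₁ (a • comp2 x + b • comp2 y)
      < a • expMoment m₁ ν₁₂ (comp1 x) + b • expMoment m₁ ν₁₂ (comp1 y)
        + (a • expMoment m₂ ν₂₁ (comp2 x) + b • expMoment m₂ ν₂₁ (comp2 y)) := by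
    rcases hlt with h | h
    · exact add_lt_add_of_lt_of_le (h₁.2 hx₁ hy₁ h ha hb hab) hle₂
    · exact add_lt_add_of_le_of_lt hle₁ (h₂.2 hx₂ hy₂ h ha hb hab)
  simp only [zbar_eq_expMoment, dot6_add, dot6_smul, comp1_add, comp1_smul, comp2_add, comp2_smul,
    smul_eq_mul] at hsum ⊢
  linarith

lemma dot6_muBar (m₁ m₂ : ℝ) (ν₁₂ ν₂₁ f₁ f₂ : V3 → ℝ) (u : L6) :
    dot6 u (muBar m₁ m₂ ν₁₂ ν₂₁ f₁ f₂)
      = dot5 (comp1 u) (momVec m₁ ν₁₂ f₁) + dot5 (comp2 u) (momVec m₂ ν₂₁ f₂) := by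
  have e₀ : ∀ (m : ℝ) (ν f : V3 → ℝ), ∫ v, m * ν v * f v = ∫ v, ν v * (m * f v) :=
    fun m ν f => integral_congr_ae (.of_forall fun v => by ring)
  have e₁ : ∀ (m : ℝ) (ν f w : V3 → ℝ), ∫ v, m * ν v * w v * f v = ∫ v, ν v * (m * w v) * f v :=
    fun m ν f w => integral_congr_ae (.of_forall fun v => by ring)
  simp only [dot6, dot5, dot3, muBar, momVec, comp1, comp2, Fin.sum_univ_three, e₀, e₁]
  ring

lemma integrable_mul_of_abs_le_one_add_nsq {ν f w : V3 → ℝ} (hν : Measurable ν)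
    (hν0 : ∀ v, 0 ≤ ν v) (hf : Measurable f) (hf0 : ∀ v, 0 ≤ f v)
    (hint : Integrable (fun v => ν v * (1 + nsq v) * f v)) (hw : Measurable w) {C : ℝ}
    (hC : ∀ v, |w v| ≤ C * (1 + nsq v)) : Integrable (fun v => ν v * w v * f v) := by
  refine (hint.const_mul C).mono' ((hν.mul hw).mul hf).aestronglyMeasurable (.of_forall fun v => ?_)
  rw [Real.norm_eq_abs, abs_mul, abs_mul, abs_of_nonneg (hν0 v), abs_of_nonneg (hf0 v)]
  calc ν v * |w v| * f v ≤ ν v * (C * (1 + nsq v)) * f v := by gcongr <;> simp [hν0, hf0, hC]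
    _ = C * (ν v * (1 + nsq v) * f v) := by ring

lemma abs_le_one_add_nsq (v : V3) (i : Fin 3) : |v i| ≤ 1 + nsq v := by
  have hi : v i ^ 2 ≤ nsq v :=
    Finset.single_le_sum (f := fun j => v j ^ 2) (fun j _ => sq_nonneg _) (Finset.mem_univ i)
  nlinarith [sq_abs (v i), sq_nonneg (|v i| - 1)]

lemma exists_abs_dot5_aVec_le (c : L5) (m : ℝ) :
    ∃ C, ∀ v, |dot5 c (aVec m v)| ≤ C * (1 + nsq v) := by
  refine ⟨|m| * (|c.1| + ∑ i, |c.2.1 i| + |c.2.2|), fun v => ?_⟩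
  have h₃ : |dot3 c.2.1 v| ≤ (∑ i, |c.2.1 i|) * (1 + nsq v) := by
    rw [Finset.sum_mul]
    refine (Finset.abs_sum_le_sum_abs _ _).trans (Finset.sum_le_sum fun i _ => ?_)
    rw [abs_mul]
    exact mul_le_mul_of_nonneg_left (abs_le_one_add_nsq v i) (abs_nonneg _)
  have hn := nsq_nonneg v
  rw [dot5_aVec, abs_mul, mul_assoc]
  gcongr
  calc |c.1 + dot3 c.2.1 v + c.2.2 * nsq v| ≤ |c.1| + |dot3 c.2.1 v| + |c.2.2| * nsq v := by
        refine (abs_add_le _ _).trans ?_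
        rw [abs_mul, abs_of_nonneg hn]
        linarith [abs_add_le c.1 (dot3 c.2.1 v)]
    _ ≤ _ := by nlinarith [abs_nonneg c.1, abs_nonneg c.2.2]

lemma integrable_mul_dot5_aVec_mul {ν f : V3 → ℝ} (hν : Measurable ν) (hν0 : ∀ v, 0 ≤ ν v)
    (hf : Measurable f) (hf0 : ∀ v, 0 ≤ f v)
    (hint : Integrable (fun v => ν v * (1 + nsq v) * f v)) (m : ℝ) (c : L5) :
    Integrable fun v => ν v * dot5 c (aVec m v) * f v :=
  (exists_abs_dot5_aVec_le c m).elim fun _ hC =>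
    integrable_mul_of_abs_le_one_add_nsq hν hν0 hf hf0 hint (continuous_dot5_aVec c m).measurable hC

theorem integral_mul_dot5_aVec_mul {ν f : V3 → ℝ} (hν : Measurable ν) (hν0 : ∀ v, 0 ≤ ν v)
    (hf : Measurable f) (hf0 : ∀ v, 0 ≤ f v)
    (hint : Integrable (fun v => ν v * (1 + nsq v) * f v)) (m : ℝ) (c : L5) :
    ∫ v, ν v * dot5 c (aVec m v) * f v = dot5 c (momVec m ν f) := by
  have hnsq : Continuous nsq := by unfold nsq; fun_prop
  have hI : ∀ {w : V3 → ℝ}, Measurable w → ∀ {C : ℝ}, (∀ v, |w v| ≤ C * (1 + nsq v)) →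
      Integrable fun v => ν v * w v * f v :=
    fun {_} hw {_} hC => integrable_mul_of_abs_le_one_add_nsq hν hν0 hf hf0 hint hw hC
  have h₀ : Integrable fun v => ν v * (m * f v) := by
    refine (hI measurable_const (C := |m|) fun v => ?_).congr (.of_forall fun v => by ring)
    nlinarith [nsq_nonneg v, abs_nonneg m]
  have h₁ : ∀ i : Fin 3, Integrable fun v => ν v * (m * v i) * f v := fun i =>
    hI (measurable_const.mul (measurable_pi_apply i)) (C := |m|) fun v => by
      rw [abs_mul]; exact mul_le_mul_of_nonneg_left (abs_le_one_add_nsq v i) (abs_nonneg m)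
  have h₂ : Integrable fun v => ν v * (m * nsq v) * f v :=
    hI (measurable_const.mul hnsq.measurable) (C := |m|) fun v => by
      rw [abs_mul, abs_of_nonneg (nsq_nonneg v)]
      nlinarith [nsq_nonneg v, abs_nonneg m]
  have hpt : (fun v => ν v * dot5 c (aVec m v) * f v) = fun v =>
      (c.1 * (ν v * (m * f v)) + ∑ i, c.2.1 i * (ν v * (m * v i) * f v))
        + c.2.2 * (ν v * (m * nsq v) * f v) := by
    ext v
    simp only [dot5_aVec, dot3, Fin.sum_univ_three]
    ring
  have hsum : Integrable fun v => ∑ i, c.2.1 i * (ν v * (m * v i) * f v) :=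
    integrable_finsetSum _ fun i _ => (h₁ i).const_mul _
  have hfirst :
      Integrable fun v => c.1 * (ν v * (m * f v)) + ∑ i, c.2.1 i * (ν v * (m * v i) * f v) :=
    (h₀.const_mul _).add hsum
  rw [hpt, integral_add hfirst (h₂.const_mul _), integral_add (h₀.const_mul _) hsum,
    integral_finsetSum _ fun i _ => (h₁ i).const_mul _]
  simp only [integral_const_mul, dot5, dot3, momVec]

structure IsAdmissibleDensity (ν f : V3 → ℝ) : Prop where
  measurable : Measurable f
  nonneg : ∀ v, 0 ≤ f v
  not_ae_zero : ¬ f =ᵐ[volume] fun _ => (0 : ℝ)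
  integrable : Integrable (fun v => ν v * (1 + nsq v) * f v)

theorem ae_dot5_aVec_nonpos_of_expMoment_le {m : ℝ} {ν : V3 → ℝ} (hν : IsCollisionFrequency m ν)
    {c₀ c : L5} {B₀ B₁ : ℝ} (hdom : ∀ t : ℝ, 0 ≤ t → (c₀ + t • c).2.2 < 0)
    (hle : ∀ t, 0 ≤ t → expMoment m ν (c₀ + t • c) ≤ B₀ + t * B₁) :
    ∀ᵐ v, dot5 c (aVec m v) ≤ 0 := by
  have hfac : ∀ t v, ν v * expA m (c₀ + t • c) v
      = ν v * expA m c₀ v * exp (t * dot5 c (aVec m v)) := fun t v => by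
    rw [expA_add_smul, mul_assoc]
  refine ae_nonpos_of_integral_mul_exp_le (w := fun v => ν v * expA m c₀ v) (B₀ := B₀) (B₁ := B₁)
    (fun v => mul_pos (hν.pos v) (exp_pos _))
    (continuous_dot5_aVec c m).measurable (fun t ht => ?_) (fun t ht => ?_)
  · simpa only [hfac] using hν.integrable_expA _ (hdom t ht)
  · simpa only [expMoment, hfac] using hle t ht

theorem eq_zero_of_integral_mul_dot5_aVec_mul_eq_zero {m : ℝ} (hm : m ≠ 0) {ν f : V3 → ℝ}
    (hν : ∀ v, 0 < ν v) (hf0 : ∀ v, 0 ≤ f v) (hf : ¬ f =ᵐ[volume] fun _ => (0 : ℝ)) {c : L5}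
    (hint : Integrable fun v => ν v * dot5 c (aVec m v) * f v)
    (hle : ∀ᵐ v, dot5 c (aVec m v) ≤ 0) (hzero : ∫ v, ν v * dot5 c (aVec m v) * f v = 0) :
    c = 0 := by
  by_contra hc
  have hnonneg : 0 ≤ᵐ[volume] fun v => -(ν v * dot5 c (aVec m v) * f v) := by
    filter_upwards [hle] with v hv
    have := mul_nonpos_of_nonpos_of_nonneg hv (mul_nonneg (hν v).le (hf0 v))
    simp only [Pi.zero_apply]
    linarith
  have hae := (integral_eq_zero_iff_of_nonneg_ae hnonneg hint.neg).1
    (by rw [integral_neg, hzero, neg_zero])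
  refine hf ?_
  filter_upwards [hae, measure_eq_zero_iff_ae_notMem.1 (volume_setOf_dot5_aVec_eq_zero hm hc)]
    with v hv hpv
  simpa [(hν v).ne', hpv] using hv

section Mixture

variable {m₁ m₂ : ℝ} {ν₁₂ ν₂₁ f₁ f₂ : V3 → ℝ}

theorem eq_zero_of_zbar_le_on_ray (hm₁ : m₁ ≠ 0) (hm₂ : m₂ ≠ 0)
    (hν₁₂ : IsCollisionFrequency m₁ ν₁₂) (hν₂₁ : IsCollisionFrequency m₂ ν₂₁)
    (hf₁ : IsAdmissibleDensity ν₁₂ f₁) (hf₂ : IsAdmissibleDensity ν₂₁ f₂) {l₀ u : L6} {M : ℝ}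
    (hray : ∀ t : ℝ, 0 ≤ t → (l₀ + t • u).2.2.2 < 0 ∧
      zbar m₁ m₂ ν₁₂ ν₂₁ (l₀ + t • u) (muBar m₁ m₂ ν₁₂ ν₂₁ f₁ f₂) ≤ M) :
    u = 0 := by
  set ρ := muBar m₁ m₂ ν₁₂ ν₂₁ f₁ f₂
  have hν₁₂0 := fun v => (hν₁₂.pos v).le
  have hν₂₁0 := fun v => (hν₂₁.pos v).le
  have hE₁ := expMoment_nonneg (m := m₁) hν₁₂0
  have hE₂ := expMoment_nonneg (m := m₂) hν₂₁0
  have hbound : ∀ t : ℝ, 0 ≤ t →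
      expMoment m₁ ν₁₂ (comp1 l₀ + t • comp1 u) + expMoment m₂ ν₂₁ (comp2 l₀ + t • comp2 u)
        ≤ (M + dot6 l₀ ρ) + t * dot6 u ρ := fun t ht => by
    have h := (hray t ht).2
    rw [zbar_eq_expMoment, dot6_add, dot6_smul, comp1_add, comp1_smul, comp2_add, comp2_smul] at h
    linarith
  have hd : 0 ≤ dot6 u ρ := by
    by_contra! hd
    set t := (|M + dot6 l₀ ρ| + 1) / -dot6 u ρ
    have htd : t * dot6 u ρ = -(|M + dot6 l₀ ρ| + 1) := by
      simp only [t]; field_simp [hd.ne]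
    have h := hbound t (div_nonneg (by positivity) (neg_nonneg.2 hd.le))
    linarith [hE₁ (comp1 l₀ + t • comp1 u), hE₂ (comp2 l₀ + t • comp2 u),
      le_abs_self (M + dot6 l₀ ρ)]
  have hp₁ := ae_dot5_aVec_nonpos_of_expMoment_le hν₁₂ (c₀ := comp1 l₀) (c := comp1 u)
    (B₀ := M + dot6 l₀ ρ) (B₁ := dot6 u ρ)
    (fun t ht => (hray t ht).1) fun t ht => by linarith [hbound t ht, hE₂ (comp2 l₀ + t • comp2 u)]
  have hp₂ := ae_dot5_aVec_nonpos_of_expMoment_le hν₂₁ (c₀ := comp2 l₀) (c := comp2 u)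
    (B₀ := M + dot6 l₀ ρ) (B₁ := dot6 u ρ)
    (fun t ht => (hray t ht).1) fun t ht => by linarith [hbound t ht, hE₁ (comp1 l₀ + t • comp1 u)]
  have hint₁ := integrable_mul_dot5_aVec_mul hν₁₂.measurable hν₁₂0 hf₁.measurable hf₁.nonneg
    hf₁.integrable m₁ (comp1 u)
  have hint₂ := integrable_mul_dot5_aVec_mul hν₂₁.measurable hν₂₁0 hf₂.measurable hf₂.nonneg
    hf₂.integrable m₂ (comp2 u)
  have hI₁ : ∫ v, ν₁₂ v * dot5 (comp1 u) (aVec m₁ v) * f₁ v ≤ 0 :=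
    integral_nonpos_of_ae (hp₁.mono fun v hv =>
      mul_nonpos_of_nonpos_of_nonneg (mul_nonpos_of_nonneg_of_nonpos (hν₁₂0 v) hv) (hf₁.nonneg v))
  have hI₂ : ∫ v, ν₂₁ v * dot5 (comp2 u) (aVec m₂ v) * f₂ v ≤ 0 :=
    integral_nonpos_of_ae (hp₂.mono fun v hv =>
      mul_nonpos_of_nonpos_of_nonneg (mul_nonpos_of_nonneg_of_nonpos (hν₂₁0 v) hv) (hf₂.nonneg v))
  have hsplit : dot6 u ρ = (∫ v, ν₁₂ v * dot5 (comp1 u) (aVec m₁ v) * f₁ v)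
      + ∫ v, ν₂₁ v * dot5 (comp2 u) (aVec m₂ v) * f₂ v := by
    rw [dot6_muBar, integral_mul_dot5_aVec_mul hν₁₂.measurable hν₁₂0 hf₁.measurable hf₁.nonneg
      hf₁.integrable m₁ (comp1 u), integral_mul_dot5_aVec_mul hν₂₁.measurable hν₂₁0 hf₂.measurable
      hf₂.nonneg hf₂.integrable m₂ (comp2 u)]
  refine eq_of_comp1_eq_of_comp2_eq ?_ ?_
  · exact eq_zero_of_integral_mul_dot5_aVec_mul_eq_zero hm₁ hν₁₂.pos hf₁.nonneg hf₁.not_ae_zero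
      hint₁ hp₁ (by linarith)
  · exact eq_zero_of_integral_mul_dot5_aVec_mul_eq_zero hm₂ hν₂₁.pos hf₂.nonneg hf₂.not_ae_zero
      hint₂ hp₂ (by linarith)

theorem continuousOn_zbar (hm₁ : m₁ ≠ 0) (hm₂ : m₂ ≠ 0) (hν₁₂ : IsCollisionFrequency m₁ ν₁₂)
    (hν₂₁ : IsCollisionFrequency m₂ ν₂₁) (ρ : L6) :
    ContinuousOn (fun l => zbar m₁ m₂ ν₁₂ ν₂₁ l ρ) {l : L6 | l.2.2.2 < 0} :=
  (strictConvexOn_zbar hm₁ hm₂ hν₁₂ hν₂₁ ρ).convexOn.continuousOn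
    (isOpen_lt (by fun_prop) continuous_const)

theorem isClosed_sublevel_zbar (hm₁ : m₁ ≠ 0) (hm₂ : m₂ ≠ 0) (hν₁₂ : IsCollisionFrequency m₁ ν₁₂)
    (hν₂₁ : IsCollisionFrequency m₂ ν₂₁)
    (hdom : ∀ c : L5, Integrable (fun v => ν₁₂ v * expA m₁ c v) → c.2.2 < 0) (ρ : L6) (M : ℝ) :
    IsClosed {l : L6 | l.2.2.2 < 0 ∧ zbar m₁ m₂ ν₁₂ ν₂₁ l ρ ≤ M} := by
  refine isClosed_of_closure_subset fun l hl => ?_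
  obtain ⟨x, hxS, hx⟩ := mem_closure_iff_seq_limit.1 hl
  have hdot : Tendsto (fun n => dot6 (x n) ρ) atTop (𝓝 (dot6 l ρ)) :=
    ((show Continuous fun l : L6 => dot6 l ρ by unfold dot6 dot3; fun_prop).tendsto l).comp hx
  have hl₂ : l.2.2.2 < 0 := by
    refine hdom (comp1 l) (integrable_of_tendsto_of_integral_le (C := M + dot6 l ρ + 1)
      (g := fun n v => ν₁₂ v * expA m₁ (comp1 (x n)) v)
      (fun n v => (mul_pos (hν₁₂.pos v) (exp_pos _)).le)
      (fun n => hν₁₂.integrable_expA _ (hxS n).1)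
      (hν₁₂.measurable.mul (measurable_expA _ _)).aestronglyMeasurable
      (.of_forall fun v => ?_) ?_)
    · have hcomp1 : Continuous comp1 := by unfold comp1; fun_prop
      exact ((continuous_const.mul ((continuous_expA_left m₁ v).comp hcomp1)).tendsto l).comp hx
    · filter_upwards [hdot.eventually (gt_mem_nhds (lt_add_one _))] with n hn
      have hzbar := (hxS n).2
      rw [zbar_eq_expMoment] at hzbar
      have := expMoment_nonneg (m := m₂) (fun v => (hν₂₁.pos v).le) (comp2 (x n))
      change expMoment m₁ ν₁₂ (comp1 (x n)) ≤ _
      linarith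
  refine ⟨hl₂, le_of_tendsto (((continuousOn_zbar hm₁ hm₂ hν₁₂ hν₂₁ ρ).continuousAt
    ((isOpen_lt (by fun_prop) continuous_const).mem_nhds hl₂)).tendsto.comp hx)
    (.of_forall fun n => (hxS n).2)⟩

theorem isCompact_sublevel_zbar (hm₁ : m₁ ≠ 0) (hm₂ : m₂ ≠ 0)
    (hν₁₂ : IsCollisionFrequency m₁ ν₁₂) (hν₂₁ : IsCollisionFrequency m₂ ν₂₁)
    (hdom : ∀ c : L5, Integrable (fun v => ν₁₂ v * expA m₁ c v) → c.2.2 < 0)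
    (hf₁ : IsAdmissibleDensity ν₁₂ f₁) (hf₂ : IsAdmissibleDensity ν₂₁ f₂) (M : ℝ) :
    IsCompact {l : L6 | l.2.2.2 < 0 ∧ zbar m₁ m₂ ν₁₂ ν₂₁ l (muBar m₁ m₂ ν₁₂ ν₂₁ f₁ f₂) ≤ M} := by
  set S := {l : L6 | l.2.2.2 < 0 ∧ zbar m₁ m₂ ν₁₂ ν₂₁ l (muBar m₁ m₂ ν₁₂ ν₂₁ f₁ f₂) ≤ M}
  have hclosed := isClosed_sublevel_zbar hm₁ hm₂ hν₁₂ hν₂₁ hdom (muBar m₁ m₂ ν₁₂ ν₂₁ f₁ f₂) M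
  refine Metric.isCompact_of_isClosed_isBounded hclosed (by_contra fun hunb => ?_)
  obtain ⟨l₀, hl₀⟩ : S.Nonempty :=
    Set.nonempty_iff_ne_empty.2 fun h => hunb (h ▸ Bornology.isBounded_empty)
  have hconv : Convex ℝ S := (strictConvexOn_zbar hm₁ hm₂ hν₁₂ hν₂₁ _).convexOn.convex_le M
  obtain ⟨u, hu, hray⟩ := hconv.exists_ray_subset_of_not_isBounded hclosed hl₀ hunb
  exact hu (eq_zero_of_zbar_le_on_ray hm₁ hm₂ hν₁₂ hν₂₁ hf₁ hf₂ hray)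

end Mixture

theorem mixture_dual_attains_min_general
    (m₁ m₂ : ℝ) (hm₁ : 0 < m₁) (hm₂ : 0 < m₂)
    (ν₁₂ ν₂₁ : V3 → ℝ) (hν₁₂meas : Measurable ν₁₂) (hν₂₁meas : Measurable ν₂₁)
    (hν₁₂pos : ∀ v, 0 < ν₁₂ v) (hν₂₁pos : ∀ v, 0 < ν₂₁ v)
    (hass₁ : ∀ l : L5, Integrable (fun v => ν₁₂ v * expA m₁ l v) ↔ l.2.2 < 0)
    (hass₂ : ∀ l : L5, Integrable (fun v => ν₂₁ v * expA m₂ l v) ↔ l.2.2 < 0)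
    (f₁ f₂ : V3 → ℝ) (hf₁meas : Measurable f₁) (hf₂meas : Measurable f₂)
    (hf₁0 : ∀ v, 0 ≤ f₁ v) (hf₂0 : ∀ v, 0 ≤ f₂ v)
    (hf₁ne : ¬ f₁ =ᵐ[volume] (fun _ => (0 : ℝ)))
    (hf₂ne : ¬ f₂ =ᵐ[volume] (fun _ => (0 : ℝ)))
    (hf₁int : Integrable (fun v => ν₁₂ v * (1 + nsq v) * f₁ v))
    (hf₂int : Integrable (fun v => ν₂₁ v * (1 + nsq v) * f₂ v)) :
    ∃! lstar : L6, lstar.2.2.2 < 0 ∧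
      ∀ l : L6, l.2.2.2 < 0 →
        zbar m₁ m₂ ν₁₂ ν₂₁ lstar (muBar m₁ m₂ ν₁₂ ν₂₁ f₁ f₂) ≤
          zbar m₁ m₂ ν₁₂ ν₂₁ l (muBar m₁ m₂ ν₁₂ ν₂₁ f₁ f₂) := by
  have hν₁₂ : IsCollisionFrequency m₁ ν₁₂ := ⟨hν₁₂meas, hν₁₂pos, fun l => (hass₁ l).2⟩
  have hν₂₁ : IsCollisionFrequency m₂ ν₂₁ := ⟨hν₂₁meas, hν₂₁pos, fun l => (hass₂ l).2⟩
  have hf₁ : IsAdmissibleDensity ν₁₂ f₁ := ⟨hf₁meas, hf₁0, hf₁ne, hf₁int⟩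
  have hf₂ : IsAdmissibleDensity ν₂₁ f₂ := ⟨hf₂meas, hf₂0, hf₂ne, hf₂int⟩
  obtain ⟨lstar, ⟨hlstar, hmin⟩, huniq⟩ :=
    (strictConvexOn_zbar hm₁.ne' hm₂.ne' hν₁₂ hν₂₁ _).existsUnique_isMinOn
      (continuousOn_zbar hm₁.ne' hm₂.ne' hν₁₂ hν₂₁ _)
      (isCompact_sublevel_zbar hm₁.ne' hm₂.ne' hν₁₂ hν₂₁ (fun l => (hass₁ l).1) hf₁ hf₂)
      ⟨(0, 0, 0, -1), show (-1 : ℝ) < 0 by norm_num⟩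
  exact ⟨lstar, ⟨hlstar, fun l hl => hmin hl⟩,
    fun y ⟨hy, hymin⟩ => huniq y ⟨hy, fun l hl => hymin l hl⟩⟩

/-- for `ρ̄ = μ̄(f₁,f₂)` with admissible `f₁, f₂`, the mixture
dual function `λ ↦ z̄(λ;ρ̄)` attains its infimum over `Λ̄ = {λ ∈ ℝ⁶ : λ₂ < 0}`
at a unique point `λ* ∈ Λ̄`. -/
theorem mixture_dual_attains_min
    (m₁ m₂ : ℝ) (hm₁ : 0 < m₁) (hm₂ : 0 < m₂)
    (ν₁₂ ν₂₁ : V3 → ℝ) (hν₁₂meas : Measurable ν₁₂) (hν₂₁meas : Measurable ν₂₁)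
    (hν₁₂pos : ∀ v, 0 < ν₁₂ v) (hν₂₁pos : ∀ v, 0 < ν₂₁ v)
    (hass₁ : ∀ l : L5, Integrable (fun v => ν₁₂ v * expA m₁ l v) ↔ l.2.2 < 0)
    (hass₂ : ∀ l : L5, Integrable (fun v => ν₂₁ v * expA m₂ l v) ↔ l.2.2 < 0)
    (hass₁' : ∀ l : L5, l.2.2 < 0 →
      Integrable (fun v => ν₁₂ v * (1 + nsq v) * expA m₁ l v))
    (hass₂' : ∀ l : L5, l.2.2 < 0 →
      Integrable (fun v => ν₂₁ v * (1 + nsq v) * expA m₂ l v))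
    (f₁ f₂ : V3 → ℝ) (hf₁meas : Measurable f₁) (hf₂meas : Measurable f₂)
    (hf₁0 : ∀ v, 0 ≤ f₁ v) (hf₂0 : ∀ v, 0 ≤ f₂ v)
    (hf₁ne : ¬ f₁ =ᵐ[volume] (fun _ => (0 : ℝ)))
    (hf₂ne : ¬ f₂ =ᵐ[volume] (fun _ => (0 : ℝ)))
    (hf₁int : Integrable (fun v => ν₁₂ v * (1 + nsq v) * f₁ v))
    (hf₂int : Integrable (fun v => ν₂₁ v * (1 + nsq v) * f₂ v)) :
    ∃! lstar : L6, lstar.2.2.2 < 0 ∧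
      ∀ l : L6, l.2.2.2 < 0 →
        zbar m₁ m₂ ν₁₂ ν₂₁ lstar (muBar m₁ m₂ ν₁₂ ν₂₁ f₁ f₂) ≤
          zbar m₁ m₂ ν₁₂ ν₂₁ l (muBar m₁ m₂ ν₁₂ ν₂₁ f₁ f₂) :=
  mixture_dual_attains_min_general m₁ m₂ hm₁ hm₂ ν₁₂ ν₂₁ hν₁₂meas hν₂₁meas hν₁₂pos hν₂₁pos hass₁
    hass₂ f₁ f₂ hf₁meas hf₂meas hf₁0 hf₂0 hf₁ne hf₂ne hf₁int hf₂int
end
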